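/- Let 0 < c < 1 and d > 2⌊log₂(1/c)⌋ + 4. If P is a subpath of P_d with |V(P)| ≥ c·|V(G_d)|, then V(P) ∩ S_j ≠ ∅ for every j with ⌊log₂(1/c)⌋ + 3 ≤ j ≤ d. -/

import Mathlib

/-!
Write `n = ⌊log₂ (1/c)⌋`, so that `c · 2^(n+1) > 1`. Along `P_d` the elements of `S^d` appear
in lexicographic order, each followed by at most two subdivision vertices, so a subpath
containing `m` of them has at most `3m + 2` vertices.

Since `S^(k+1)` lists `[1], 1·S^k, [2], [3], 3·S^k, [4]`, an induction on `d` bounds a run of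
consecutive elements of `S^d` avoiding `S_j` by `max |S^(d-j)| (2j - 2)`: for `j = 1` the run
lies inside `1·S^(d-1)` or `3·S^(d-1)`; otherwise it lies inside one of them (induction with
`j - 1`), or is an initial or final segment of `S^d` (shorter than `j`), or it consists of a
final segment of `1·S^(d-1)`, then `[2], [3]`, then an initial segment of `3·S^(d-1)`, both
segments being shorter than `j - 1`.

For `j ≥ n + 3` and `d ≥ 2n + 5` this leaves fewer than `|S^d| / 2^(n+1) < c · |V(G_d)|`
vertices on a subpath missing `S_j`.
-/

open SimpleGraph

/-- Sorted list of the tuple set `S^d`: tuples with entries in {1,3} except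
the last entry which is in {1,2,3,4}, of length between 1 and `d`,
listed in lexicographic order. -/
def Tl : ℕ → List (List ℕ)
  | 0 => []
  | k+1 => [[1]] ++ (Tl k).map (fun a => 1 :: a) ++ [[2], [3]]
            ++ (Tl k).map (fun a => 3 :: a) ++ [[4]]

/-- Strict lexicographic order on tuples (a proper prefix is smaller). -/
def lexLt (a b : List ℕ) : Prop := List.Lex (· < ·) a b

def lexLe (a b : List ℕ) : Prop := a = b ∨ lexLt a b

/-- `v` is the successor of `u` in the lexicographic order on `S^d`. -/
def IsSucc (d : ℕ) (u v : List ℕ) : Prop :=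
  v ∈ Tl d ∧ lexLt u v ∧ ∀ w ∈ Tl d, lexLt u w → lexLe v w

/-- The interval `[a,b]` in `S^d`. -/
def interval (d : ℕ) (a b : List ℕ) : Set (List ℕ) :=
  {c | c ∈ Tl d ∧ lexLe a c ∧ lexLe c b}

/-- `[a,b]` is a proper interval: no interior element has length `l(a)` or `l(b)`. -/
def ProperInterval (d : ℕ) (a b : List ℕ) : Prop :=
  a ∈ Tl d ∧ b ∈ Tl d ∧ lexLe a b ∧
  ∀ c ∈ interval d a b, c ≠ a → c ≠ b →
    c.length ≠ a.length ∧ c.length ≠ b.length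

/-- The set of left endpoints of flat steps of the interval `[a,b]`. -/
def flatSteps (d : ℕ) (a b : List ℕ) : Set (List ℕ) :=
  {c | c ∈ Tl d ∧ lexLe a c ∧ lexLt c b ∧ ∃ v, IsSucc d c v ∧ v.length = c.length}

/-- Vertices of `G_d`: elements of `S^d`, subdivision vertices, and centers. -/
inductive Vtx where
  | elt : List ℕ → Vtx
  | sub : ℕ → Fin 2 → Vtx
  | ctr : ℕ → Vtx
deriving DecidableEq

/-- The path `P_d` as a list of vertices: the elements of `S^d` in order,
with two subdivision vertices between consecutive elements of equal length
and one otherwise. -/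
def pathList (d : ℕ) : List Vtx :=
  ((Tl d).zipIdx.map Prod.swap).flatMap (fun p =>
    Vtx.elt p.2 :: (match (Tl d)[p.1 + 1]? with
      | none => []
      | some b =>
        if p.2.length = b.length then [Vtx.sub p.1 0, Vtx.sub p.1 1]
        else [Vtx.sub p.1 0]))

/-- `x` and `y` are consecutive in the list `l`. -/
def ChainAdj {α : Type} (l : List α) (x y : α) : Prop :=
  ∃ i : ℕ, (l[i]? = some x ∧ l[i+1]? = some y) ∨
       (l[i]? = some y ∧ l[i+1]? = some x)

/-- Adjacency from a center vertex. -/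
def ctrAdj (d : ℕ) : Vtx → Vtx → Prop
  | Vtx.ctr k, Vtx.ctr m => k ≠ m ∧ 1 ≤ k ∧ k ≤ d ∧ 1 ≤ m ∧ m ≤ d
  | Vtx.ctr k, Vtx.elt a => 1 ≤ k ∧ k ≤ d ∧ a ∈ Tl d ∧ a.length = k
  | _, _ => False

/-- The vertex set of `G_d`. -/
def VSet (d : ℕ) : Finset Vtx :=
  (pathList d).toFinset ∪ (Finset.Icc 1 d).image Vtx.ctr

def GdAdj (d : ℕ) (x y : Vtx) : Prop :=
  x ≠ y ∧ (ChainAdj (pathList d) x y ∨ ctrAdj d x y ∨ ctrAdj d y x)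

/-- The graph `G_d`. -/
def Gd (d : ℕ) : SimpleGraph {x // x ∈ VSet d} where
  Adj x y := GdAdj d x.1 y.1
  symm := ⟨by
    rintro x y ⟨hne, h⟩
    refine ⟨hne.symm, ?_⟩
    rcases h with ⟨i, hi⟩ | h | h
    · exact Or.inl ⟨i, hi.symm⟩
    · exact Or.inr (Or.inr h)
    · exact Or.inr (Or.inl h)⟩
  loopless := ⟨fun x h => h.1 rfl⟩

/-- A rank decomposition of a graph `G`: a finite cubic tree together with a
bijection from the vertices of `G` to the leaves of the tree. -/
structure RankDecomp {V : Type} [Fintype V] (G : SimpleGraph V) where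
  t : Type
  fin : Fintype t
  tree : SimpleGraph t
  conn : tree.Connected
  acyc : tree.IsAcyclic
  two_le : 2 ≤ Nat.card t
  cubic : ∀ v : t, (tree.neighborSet v).ncard = 1 ∨ (tree.neighborSet v).ncard = 3
  leafEquiv : V ≃ {v : t // (tree.neighborSet v).ncard = 1}

/-- The set of vertices of `G` whose leaf lies on the side of `a` of
the edge `ab` of the decomposition tree. -/
def RankDecomp.side {V : Type} [Fintype V] {G : SimpleGraph V}
    (D : RankDecomp G) (a b : D.t) : Set V :=
  {x | (D.tree.deleteEdges {s(a, b)}).Reachable (D.leafEquiv x).1 a}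

/-- The cutrank function of `G`: the GF(2)-rank of the adjacency submatrix
between `X` and its complement. -/
noncomputable def cutRank {V : Type} [Fintype V] (G : SimpleGraph V) (X : Set V) : ℕ :=
  haveI : Fintype ↥X := Fintype.ofFinite _
  haveI : Fintype ↥(Xᶜ) := Fintype.ofFinite _
  haveI : DecidableRel G.Adj := Classical.decRel _
  Matrix.rank (Matrix.of (fun (x : ↥X) (y : ↥(Xᶜ)) =>
    if G.Adj x.1 y.1 then (1 : ZMod 2) else 0))

/-- The decomposition `D` has width at most `k`. -/
def RankDecomp.WidthLE {V : Type} [Fintype V] {G : SimpleGraph V}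
    (D : RankDecomp G) (k : ℕ) : Prop :=
  ∀ a b : D.t, D.tree.Adj a b → cutRank G (D.side a b) ≤ k

/-- The rank-width of `G`. -/
noncomputable def rankwidth {V : Type} [Fintype V] (G : SimpleGraph V) : ℕ :=
  sInf {k | ∃ D : RankDecomp G, D.WidthLE k}

/-- `l` is an induced path in `G`: its vertices are distinct and two of them
are adjacent in `G` iff they are consecutive on `l`. -/
def IsInducedPathList {V : Type} (G : SimpleGraph V) (l : List V) : Prop :=
  l.Nodup ∧ ∀ x ∈ l, ∀ y ∈ l, (G.Adj x y ↔ ChainAdj l x y)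

/-- The diamond: the complete graph on four vertices minus an edge. -/
def diamond : SimpleGraph (Fin 4) := (⊤ : SimpleGraph (Fin 4)).deleteEdges {s(2, 3)}

namespace List

variable {α : Type*} {l xs ys : List α} {a : α}

theorem IsPrefix.prefix_left_of_mem (h : l <+: xs ++ ys) (ha : a ∈ xs) (hl : a ∉ l) :
    l <+: xs :=
  (prefix_or_prefix_of_prefix h (prefix_append xs ys)).resolve_right
    fun hx => hl (hx.subset ha)

theorem IsSuffix.suffix_right_of_mem (h : l <:+ xs ++ ys) (ha : a ∈ ys) (hl : a ∉ l) :
    l <:+ ys :=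
  (suffix_or_suffix_of_suffix h (suffix_append xs ys)).resolve_right
    fun hy => hl (hy.subset ha)

theorem IsInfix.infix_or_infix_of_not_mem (h : l <:+: xs ++ a :: ys) (hl : a ∉ l) :
    l <:+: xs ∨ l <:+: ys := by
  rcases infix_append_iff.mp h with h | h | ⟨l₁, l₂, rfl, h₁, h₂⟩
  · exact .inl h
  · rcases infix_cons_iff.mp h with h | h
    · rcases prefix_cons_iff.mp h with rfl | ⟨t, rfl, -⟩
      · exact .inl nil_infix
      · exact absurd (mem_cons_self ..) hl
    · exact .inr h
  · rcases prefix_cons_iff.mp h₂ with rfl | ⟨t, rfl, -⟩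
    · exact .inl (by simpa using h₁.isInfix)
    · exact absurd (mem_append_right _ (mem_cons_self ..)) hl

theorem IsSuffix.append_cases (h : l <:+ xs ++ ys) :
    l <:+ ys ∨ ∃ s, l = s ++ ys ∧ s <:+ xs := by
  obtain ⟨u, hu⟩ := h
  rcases append_eq_append_iff.mp hu with ⟨s, rfl, rfl⟩ | ⟨v, -, rfl⟩
  · exact .inr ⟨s, rfl, suffix_append u s⟩
  · exact .inl (suffix_append v l)

theorem IsInfix.append_append_cases {m : List α} (h : l <:+: xs ++ m ++ ys) :
    l <:+: xs ∨ l <:+: ys ∨ ∃ s p, s <:+ xs ∧ p <+: ys ∧ s <:+: l ∧ p <:+: l ∧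
      l.length ≤ s.length + m.length + p.length := by
  rcases infix_append_iff.mp h with h | h | ⟨u, p, rfl, hu, hp⟩
  · rcases infix_append_iff.mp h with h | h | ⟨s, p, rfl, hs, hp⟩
    · exact .inl h
    · exact .inr (.inr ⟨[], [], nil_suffix, nil_prefix, nil_infix, nil_infix,
        by simpa using h.length_le⟩)
    · exact .inr (.inr ⟨s, [], hs, nil_prefix, (prefix_append s p).isInfix, nil_infix,
        by simpa using hp.length_le⟩)
  · exact .inr (.inl h)
  · refine .inr (.inr ?_)
    rcases hu.append_cases with hu | ⟨s, rfl, hs⟩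
    · exact ⟨[], p, nil_suffix, hp, nil_infix, (suffix_append u p).isInfix,
        by simpa using hu.length_le⟩
    · exact ⟨s, p, hs, hp, (prefix_append s m).isInfix.trans (prefix_append _ p).isInfix,
        (suffix_append (s ++ m) p).isInfix, by simp [Nat.add_assoc]⟩

end List

section Blocks

variable {α β : Type*} {p : β → Bool} {g : α → List β} {r : ℕ} {xs : List α}
  {l : List β}

theorem length_le_of_prefix_flatMap
    (hg : ∀ x ∈ xs, ∃ b tl, g x = b :: tl ∧ p b ∧ tl.length ≤ r)
    (hl : l <+: xs.flatMap g) :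
    l.length ≤ (r + 1) * l.countP p := by
  induction xs generalizing l with
  | nil => simp [List.eq_nil_of_prefix_nil hl]
  | cons x xs ih =>
    obtain ⟨b, tl, hx, hb, htl⟩ := hg x List.mem_cons_self
    rw [List.flatMap_cons, hx] at hl
    rcases List.prefix_or_prefix_of_prefix hl (List.prefix_append _ _) with hl' | ⟨u, rfl⟩
    · rcases List.prefix_cons_iff.mp hl' with rfl | ⟨u, rfl, hu⟩
      · simp
      · have := hu.length_le
        simp only [List.length_cons, List.countP_cons_of_pos hb]
        nlinarith
    · have := ih (fun y hy => hg y (List.mem_cons_of_mem _ hy))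
        ((List.prefix_append_right_inj _).mp hl)
      simp only [List.length_append, List.length_cons, List.countP_append,
        List.countP_cons_of_pos hb]
      nlinarith

theorem length_le_of_infix_flatMap
    (hg : ∀ x ∈ xs, ∃ b tl, g x = b :: tl ∧ p b ∧ tl.length ≤ r)
    (hl : l <:+: xs.flatMap g) :
    l.length ≤ (r + 1) * l.countP p + r := by
  induction xs generalizing l with
  | nil => simp [List.eq_nil_of_infix_nil hl]
  | cons x xs ih =>
    have hg' : ∀ y ∈ xs, ∃ b tl, g y = b :: tl ∧ p b ∧ tl.length ≤ r :=
      fun y hy => hg y (List.mem_cons_of_mem _ hy)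
    obtain ⟨b, tl, hx, hb, htl⟩ := hg x List.mem_cons_self
    have hsplit : (x :: xs).flatMap g = b :: (tl ++ xs.flatMap g) := by simp [hx]
    rw [hsplit] at hl
    rcases List.infix_cons_iff.mp hl with hpre | hl
    · have := length_le_of_prefix_flatMap hg (hsplit ▸ hpre)
      omega
    rcases List.infix_append_iff.mp hl with hl | hl | ⟨s, u, rfl, hs, hu⟩
    · have := hl.length_le
      omega
    · exact ih hg' hl
    · have := length_le_of_prefix_flatMap hg' hu
      have := hs.length_le
      simp only [List.length_append, List.countP_append]
      nlinarith

end Blocks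

theorem Tl_succ (k : ℕ) : Tl (k + 1) =
    [1] :: ((Tl k).map (1 :: ·) ++ [2] :: [3] :: ((Tl k).map (3 :: ·) ++ [[4]])) := by
  simp [Tl]

theorem length_Tl (d : ℕ) : (Tl d).length + 4 = 2 ^ (d + 2) := by
  induction d with
  | zero => rfl
  | succ k ih => simp only [Tl_succ, List.length_cons, List.length_append, List.length_map,
      List.length_nil, pow_succ] at ih ⊢; omega

theorem nil_not_mem_Tl (d : ℕ) : [] ∉ Tl d := by
  cases d <;> simp [Tl]

theorem exists_mem_Tl_length_eq {d j : ℕ} (hj : 1 ≤ j) (hjd : j ≤ d) :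
    ∃ a ∈ Tl d, a.length = j := by
  induction d generalizing j with
  | zero => omega
  | succ k ih =>
    rcases Nat.eq_or_lt_of_le hj with rfl | hj
    · exact ⟨[1], by simp [Tl_succ], rfl⟩
    · obtain ⟨a, ha, hlen⟩ := ih (j := j - 1) (by omega) (by omega)
      exact ⟨1 :: a, by simp [Tl_succ, ha], by simp; omega⟩

theorem nodup_Tl (d : ℕ) : (Tl d).Nodup := by
  induction d with
  | zero => exact List.nodup_nil
  | succ k ih =>
    simp [Tl_succ, List.nodup_append, ih.map, List.cons_injective, nil_not_mem_Tl, or_imp,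
      forall_and]

theorem length_lt_of_prefix_Tl {d j : ℕ} {t : List (List ℕ)} (hj : 1 ≤ j) (hjd : j ≤ d)
    (ht : t <+: Tl d) (hav : ∀ a ∈ t, a.length ≠ j) : t.length < j := by
  induction d generalizing j t with
  | zero => omega
  | succ k ih =>
    rw [Tl_succ] at ht
    rcases List.prefix_cons_iff.mp ht with rfl | ⟨s, rfl, hs⟩
    · exact hj
    have hj1 : j ≠ 1 := fun h => hav [1] (by simp) (by simp [h])
    obtain ⟨i, rfl⟩ : ∃ i, j = i + 2 := ⟨j - 2, by omega⟩
    obtain ⟨a, ha, hlen⟩ := exists_mem_Tl_length_eq (d := k) (j := i + 1) (by omega) (by omega)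
    obtain ⟨u, hu, rfl⟩ := List.prefix_map_iff.mp <| hs.prefix_left_of_mem
      (List.mem_map_of_mem (f := (1 :: ·)) ha)
      fun h => hav _ (List.mem_cons_of_mem _ h) (by simp [hlen])
    have := ih (j := i + 1) (by omega) (by omega) hu (by simpa using hav)
    simpa using this

theorem length_lt_of_suffix_Tl {d j : ℕ} {t : List (List ℕ)} (hj : 1 ≤ j) (hjd : j ≤ d)
    (ht : t <:+ Tl d) (hav : ∀ a ∈ t, a.length ≠ j) : t.length < j := by
  induction d generalizing j t with
  | zero => omega
  | succ k ih =>
    rcases List.suffix_concat_iff.mp ht with rfl | ⟨s, rfl, hs⟩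
    · exact hj
    have hj1 : j ≠ 1 := fun h => hav [4] (by simp) (by simp [h])
    obtain ⟨i, rfl⟩ : ∃ i, j = i + 2 := ⟨j - 2, by omega⟩
    obtain ⟨a, ha, hlen⟩ := exists_mem_Tl_length_eq (d := k) (j := i + 1) (by omega) (by omega)
    obtain ⟨u, hu, rfl⟩ := List.suffix_map_iff.mp <| hs.suffix_right_of_mem
      (List.mem_map_of_mem (f := (3 :: ·)) ha)
      fun h => hav _ (List.mem_append_left _ h) (by simp [hlen])
    have := ih (j := i + 1) (by omega) (by omega) hu
      fun b hb => by simpa using hav _ (List.mem_append_left _ (List.mem_map_of_mem hb))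
    simpa using this

theorem length_le_of_infix_Tl {d j : ℕ} {t : List (List ℕ)} (hj : 1 ≤ j) (hjd : j ≤ d)
    (ht : t <:+: Tl d) (hav : ∀ a ∈ t, a.length ≠ j) :
    t.length ≤ max (Tl (d - j)).length (2 * j - 2) := by
  induction d generalizing j t with
  | zero => omega
  | succ k ih =>
    rcases List.infix_concat_iff.mp ht with hsuf | ht
    · have := length_lt_of_suffix_Tl hj hjd hsuf hav
      omega
    simp only [List.cons_append, List.nil_append] at ht
    rcases List.infix_cons_iff.mp ht with hpre | ht
    · have := length_lt_of_prefix_Tl hj hjd (hpre.trans (List.prefix_append _ [[4]])) hav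
      omega
    obtain ⟨i, rfl⟩ : ∃ i, j = i + 1 := ⟨j - 1, by omega⟩
    rcases i with _ | i
    · simp only [List.append_assoc, List.cons_append, List.nil_append] at ht
      have hside : ∀ c, t <:+: (Tl k).map (c :: ·) → t.length ≤ (Tl k).length :=
        fun c h => by simpa using h.length_le
      rcases ht.infix_or_infix_of_not_mem (hav [2] · rfl) with h | h
      · simpa using hside 1 h
      rcases List.IsInfix.infix_or_infix_of_not_mem (xs := []) h (hav [3] · rfl) with h | h
      · simp [List.eq_nil_of_infix_nil h]
      · simpa using hside 3 h
    have hk : k + 1 - (i + 2) = k - (i + 1) := by omega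
    rw [hk]
    have hside : ∀ c, t <:+: (Tl k).map (c :: ·) →
        t.length ≤ max (Tl (k - (i + 1))).length (2 * (i + 2) - 2) := by
      intro c h
      obtain ⟨u, hu, rfl⟩ := List.infix_map_iff.mp h
      have := ih (j := i + 1) (by omega) (by omega) hu (by simpa using hav)
      simpa using this.trans (max_le_max_left _ (by omega : 2 * (i + 1) - 2 ≤ 2 * (i + 2) - 2))
    rcases ht.append_append_cases with h | h | ⟨s, p, hs, hp, hst, hpt, hlen⟩
    · exact hside 1 h
    · exact hside 3 h
    obtain ⟨u, hu, rfl⟩ := List.suffix_map_iff.mp hs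
    obtain ⟨v, hv, rfl⟩ := List.prefix_map_iff.mp hp
    have hs' := length_lt_of_suffix_Tl (d := k) (j := i + 1) (by omega) (by omega) hu
      fun b hb => by simpa using hav _ (hst.subset (List.mem_map_of_mem hb))
    have hp' := length_lt_of_prefix_Tl (d := k) (j := i + 1) (by omega) (by omega) hv
      fun b hb => by simpa using hav _ (hpt.subset (List.mem_map_of_mem hb))
    simp only [List.length_map, List.length_cons, List.length_nil] at hlen
    omega

def Vtx.getElt? : Vtx → Option (List ℕ)
  | .elt a => some a
  | _ => none

theorem Vtx.getElt?_eq_some {v : Vtx} {a : List ℕ} : v.getElt? = some a ↔ v = .elt a := by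
  cases v <;> simp [Vtx.getElt?]

theorem Vtx.mem_filterMap_getElt? {l : List Vtx} {a : List ℕ} :
    a ∈ l.filterMap Vtx.getElt? ↔ Vtx.elt a ∈ l := by
  simp [List.mem_filterMap, Vtx.getElt?_eq_some]

theorem filterMap_getElt?_pathList (d : ℕ) : (pathList d).filterMap Vtx.getElt? = Tl d := by
  rw [pathList, List.filterMap_flatMap]
  have hblock : ∀ p : ℕ × List ℕ, (Vtx.elt p.2 :: (match (Tl d)[p.1 + 1]? with
      | none => []
      | some b => if p.2.length = b.length then [Vtx.sub p.1 0, Vtx.sub p.1 1]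
        else [Vtx.sub p.1 0])).filterMap Vtx.getElt? = [p.2] := by
    intro p
    split
    · rfl
    · split <;> rfl
  simp only [hblock, ← List.map_eq_flatMap, List.map_map]
  exact List.zipIdx_map_fst 0 (Tl d)

theorem length_le_of_infix_pathList {d : ℕ} {l : List Vtx} (hl : l <:+: pathList d) :
    l.length ≤ 3 * (l.filterMap Vtx.getElt?).length + 2 := by
  rw [List.length_filterMap_eq_countP]
  refine length_le_of_infix_flatMap (r := 2) ?_ hl
  rintro ⟨i, a⟩ -
  refine ⟨Vtx.elt a, _, rfl, rfl, ?_⟩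
  split
  · simp
  · split <;> simp

theorem length_Tl_le_card_VSet (d : ℕ) : (Tl d).length ≤ (VSet d).card := by
  rw [← List.toFinset_card_of_nodup (nodup_Tl d)]
  refine Finset.card_le_card_of_injOn Vtx.elt (fun a ha => ?_) (fun a _ b _ h => Vtx.elt.inj h)
  rw [Finset.mem_coe, List.mem_toFinset, ← filterMap_getElt?_pathList,
    Vtx.mem_filterMap_getElt?] at ha
  exact Finset.mem_union_left _ (List.mem_toFinset.mpr ha)

theorem twelve_mul_lt_two_pow {m : ℕ} (hm : 5 ≤ m) : 12 * m < 2 ^ (m + 1) := by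
  induction m, hm using Nat.le_induction with
  | base => norm_num
  | succ m hm ih => rw [pow_succ]; omega

theorem three_mul_max_add_two_mul_two_pow_lt {n j d T : ℕ} (hT : T + 4 = 2 ^ (d - j + 2))
    (hj : n + 3 ≤ j) (hjd : j ≤ d) (hd : 2 * n + 5 ≤ d) :
    (3 * max T (2 * j - 2) + 2) * 2 ^ (n + 1) + 4 < 2 ^ (d + 2) := by
  have hP : 1 ≤ 2 ^ (n + 1) := Nat.one_le_two_pow
  rcases le_total T (2 * j - 2) with h | h
  · rw [max_eq_right h]
    calc (3 * (2 * j - 2) + 2) * 2 ^ (n + 1) + 4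
        ≤ 12 * (d - n) * 2 ^ (n + 1) := by
          nlinarith [show 3 * (2 * j - 2) + 6 ≤ 12 * (d - n) by omega]
      _ < 2 ^ (d - n + 1) * 2 ^ (n + 1) :=
          Nat.mul_lt_mul_of_pos_right (twelve_mul_lt_two_pow (by omega)) (by positivity)
      _ = 2 ^ (d + 2) := by rw [← pow_add]; congr 1; omega
  · rw [max_eq_left h]
    have hQ : 2 ^ (d - j + 2) * 2 ^ (n + 1) ≤ 2 ^ d := by
      rw [← pow_add]; exact Nat.pow_le_pow_right two_pos (by omega)
    calc (3 * T + 2) * 2 ^ (n + 1) + 4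
        ≤ 3 * (2 ^ (d - j + 2) * 2 ^ (n + 1)) := by nlinarith
      _ ≤ 3 * 2 ^ d := by omega
      _ < 2 ^ (d + 2) := by rw [pow_add]; have : 1 ≤ 2 ^ d := Nat.one_le_two_pow; omega

theorem one_lt_mul_two_pow_floor_logb {c : ℝ} (hc : 0 < c) :
    1 < c * 2 ^ (⌊Real.logb 2 (1 / c)⌋₊ + 1) := by
  have h : Real.logb 2 (1 / c) < (⌊Real.logb 2 (1 / c)⌋₊ + 1 : ℕ) := by
    exact_mod_cast Nat.lt_floor_add_one _
  rw [Real.logb_lt_iff_lt_rpow one_lt_two (by positivity), Real.rpow_natCast,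
    div_lt_iff₀ hc] at h
  linarith

/-- If `0 < c < 1`, `d > 2⌊log₂(1/c)⌋ + 4` and `P` is a subpath of
`P_d` with `|V(P)| ≥ c·|V(G_d)|`, then `P` meets every `S_j` for
`⌊log₂(1/c)⌋ + 3 ≤ j ≤ d`. -/
theorem stmt14 (d : ℕ) (c : ℝ) (hc0 : 0 < c) (hc1 : c < 1)
    (hd : 2 * ⌊Real.logb 2 (1 / c)⌋ + 4 < (d : ℤ))
    (l : List Vtx) (hsub : l <:+: pathList d)
    (hlen : c * ((VSet d).card : ℝ) ≤ (l.length : ℝ)) :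
    ∀ j : ℕ, ⌊Real.logb 2 (1 / c)⌋ + 3 ≤ (j : ℤ) → j ≤ d →
      ∃ a, Vtx.elt a ∈ l ∧ a.length = j := by
  intro j hj hjd
  by_contra! hmiss
  set n := ⌊Real.logb 2 (1 / c)⌋₊
  have hn : (n : ℤ) = ⌊Real.logb 2 (1 / c)⌋ :=
    Int.natCast_floor_eq_floor (Real.logb_nonneg one_lt_two (one_le_one_div hc0 hc1.le))
  have hgap := length_le_of_infix_Tl (by omega) hjd
    (filterMap_getElt?_pathList d ▸ hsub.filterMap Vtx.getElt?)
    fun a ha => hmiss a (Vtx.mem_filterMap_getElt?.mp ha)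
  have hbound := three_mul_max_add_two_mul_two_pow_lt (n := n) (length_Tl (d - j))
    (by omega) hjd (by omega)
  have hshort : l.length * 2 ^ (n + 1) < (VSet d).card := by
    have := Nat.mul_le_mul_right (2 ^ (n + 1)) ((length_le_of_infix_pathList hsub).trans
      (by omega : _ ≤ 3 * max (Tl (d - j)).length (2 * j - 2) + 2))
    have := length_Tl d
    have := length_Tl_le_card_VSet d
    omega
  have hshort' : (l.length : ℝ) * 2 ^ (n + 1) < (VSet d).card := by exact_mod_cast hshort
  nlinarith [one_lt_mul_two_pow_floor_logb hc0]
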